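/- Let u, v, w : ℤ² → ℝ be nowhere-vanishing and let (u',v',w') be the Laplace transform of (u,v,w) in the normalized gauge. If ψ : ℤ² → ℝ satisfies ((1+uT₁)(1+vT₂)+w)ψ = 0, then the function φ = (1+vT₂)ψ, i.e. φ(m,n) = ψ(m,n) + v(m,n)ψ(m,n+1), satisfies ((1+u'T₁)(1+v'T₂)+w')φ = 0: for all (m,n), (1+w'(m,n))φ(m,n) + u'(m,n)φ(m+1,n) + v'(m,n)φ(m,n+1) + u'(m,n)v'(m+1,n)φ(m+1,n+1) = 0. -/

import Mathlib

/-!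
Since `Lψ = (1 + uT₁)φ + wψ` for `φ = (1 + vT₂)ψ`, a solution satisfies
`wψ = -(1 + uT₁)φ`. Multiplying `φ = ψ + v·T₂ψ` by `w·w₂` and eliminating `ψ` and `T₂ψ`
with this identity gives a second-order equation for `φ` alone; the operator `L̃` of the
normalized gauge is that equation multiplied by `f' / (w·w₂)`.
-/

/-- The operator `(1 + uT₁)(1 + vT₂) + w`. -/
def factoredOp (u v w ψ : ℤ × ℤ → ℝ) (m n : ℤ) : ℝ :=
  (1 + w (m, n)) * ψ (m, n) + u (m, n) * ψ (m + 1, n)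
    + v (m, n) * ψ (m, n + 1) + u (m, n) * v (m + 1, n) * ψ (m + 1, n + 1)

/-- The Laplace transform of `(1 + uT₁)(1 + vT₂) + w` before normalizing the gauge. -/
def laplaceOp (u v w φ : ℤ × ℤ → ℝ) (m n : ℤ) : ℝ :=
  w (m, n + 1) * (1 + w (m, n)) * φ (m, n) + w (m, n + 1) * u (m, n) * φ (m + 1, n)
    + v (m, n) * w (m, n) * φ (m, n + 1) + v (m, n) * u (m, n + 1) * w (m, n) * φ (m + 1, n + 1)

section

variable {u v w ψ φ : ℤ × ℤ → ℝ}

theorem mul_eq_neg_of_factoredOp_eq_zero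
    (hφ : ∀ m n : ℤ, φ (m, n) = ψ (m, n) + v (m, n) * ψ (m, n + 1))
    {m n : ℤ} (hψ : factoredOp u v w ψ m n = 0) :
    w (m, n) * ψ (m, n) = -(φ (m, n) + u (m, n) * φ (m + 1, n)) := by
  unfold factoredOp at hψ
  rw [hφ, hφ]
  linear_combination hψ

theorem laplaceOp_eq_zero
    (hψ : ∀ m n : ℤ, factoredOp u v w ψ m n = 0)
    (hφ : ∀ m n : ℤ, φ (m, n) = ψ (m, n) + v (m, n) * ψ (m, n + 1)) (m n : ℤ) :
    laplaceOp u v w φ m n = 0 := by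
  have h₀ := mul_eq_neg_of_factoredOp_eq_zero hφ (hψ m n)
  have h₁ := mul_eq_neg_of_factoredOp_eq_zero hφ (hψ m (n + 1))
  unfold laplaceOp
  linear_combination
    w (m, n) * w (m, n + 1) * hφ m n + w (m, n + 1) * h₀ + v (m, n) * w (m, n) * h₁

end

section

variable {u v w H f' u' v' w' : ℤ × ℤ → ℝ}

theorem shift_f'_eq
    (hH : ∀ m n : ℤ, H (m, n) = v (m, n) * u (m, n + 1) / (u (m, n) * v (m + 1, n)))
    (hf' : ∀ m n : ℤ,
      f' (m, n) = H (m - 1, n) * w (m - 1, n) * w (m, n + 1) / w (m - 1, n + 1)) (m n : ℤ) :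
    f' (m + 1, n) = v (m, n) * u (m, n + 1) * w (m, n) * w (m + 1, n + 1)
      / (u (m, n) * v (m + 1, n) * w (m, n + 1)) := by
  rw [hf', add_sub_cancel_right, hH]
  ring

theorem u'_mul_shift_v'_eq
    (hH : ∀ m n : ℤ, H (m, n) = v (m, n) * u (m, n + 1) / (u (m, n) * v (m + 1, n)))
    (hf' : ∀ m n : ℤ,
      f' (m, n) = H (m - 1, n) * w (m - 1, n) * w (m, n + 1) / w (m - 1, n + 1))
    (hu' : ∀ m n : ℤ, u' (m, n) = f' (m, n) * u (m, n) / w (m, n))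
    (hv' : ∀ m n : ℤ, v' (m, n) = f' (m, n) * v (m, n) / w (m, n + 1))
    {m n : ℤ} (hu : u (m, n) ≠ 0) (hv : v (m + 1, n) ≠ 0) (hw : w (m, n) ≠ 0)
    (hw₁₂ : w (m + 1, n + 1) ≠ 0) :
    u' (m, n) * v' (m + 1, n) = f' (m, n) * v (m, n) * u (m, n + 1) / w (m, n + 1) := by
  rw [hu', hv', shift_f'_eq hH hf']
  field_simp

theorem factoredOp_eq_mul_laplaceOp
    (hu' : ∀ m n : ℤ, u' (m, n) = f' (m, n) * u (m, n) / w (m, n))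
    (hv' : ∀ m n : ℤ, v' (m, n) = f' (m, n) * v (m, n) / w (m, n + 1))
    (hw' : ∀ m n : ℤ, w' (m, n) = f' (m, n) * (1 + w (m, n)) / w (m, n) - 1)
    {m n : ℤ}
    (huv' : u' (m, n) * v' (m + 1, n) = f' (m, n) * v (m, n) * u (m, n + 1) / w (m, n + 1))
    (hw : w (m, n) ≠ 0) (hw₂ : w (m, n + 1) ≠ 0) (φ : ℤ × ℤ → ℝ) :
    factoredOp u' v' w' φ m n
      = f' (m, n) / (w (m, n) * w (m, n + 1)) * laplaceOp u v w φ m n := by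
  unfold factoredOp laplaceOp
  rw [huv', hw', hu', hv']
  field_simp
  ring

end

/-- The Laplace transformation in the normalized gauge maps solutions
to solutions: if `((1+uT₁)(1+vT₂)+w)ψ = 0` then `φ = (1+vT₂)ψ` satisfies
`((1+u'T₁)(1+v'T₂)+w')φ = 0`, where `(u',v',w')` is the Laplace transform of `(u,v,w)`
in the normalized gauge. -/
theorem laplace_transform_maps_solutions_normalized_gauge
    (u v w H f' u' v' w' : ℤ × ℤ → ℝ)
    (hu : ∀ p, u p ≠ 0) (hv : ∀ p, v p ≠ 0) (hw : ∀ p, w p ≠ 0)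
    (hH : ∀ m n : ℤ, H (m, n) = v (m, n) * u (m, n + 1) / (u (m, n) * v (m + 1, n)))
    (hf' : ∀ m n : ℤ,
      f' (m, n) = H (m - 1, n) * w (m - 1, n) * w (m, n + 1) / w (m - 1, n + 1))
    (hu' : ∀ m n : ℤ, u' (m, n) = f' (m, n) * u (m, n) / w (m, n))
    (hv' : ∀ m n : ℤ, v' (m, n) = f' (m, n) * v (m, n) / w (m, n + 1))
    (hw' : ∀ m n : ℤ, w' (m, n) = f' (m, n) * (1 + w (m, n)) / w (m, n) - 1)
    (ψ φ : ℤ × ℤ → ℝ)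
    (hψ : ∀ m n : ℤ, (1 + w (m, n)) * ψ (m, n) + u (m, n) * ψ (m + 1, n)
      + v (m, n) * ψ (m, n + 1) + u (m, n) * v (m + 1, n) * ψ (m + 1, n + 1) = 0)
    (hφ : ∀ m n : ℤ, φ (m, n) = ψ (m, n) + v (m, n) * ψ (m, n + 1)) :
    ∀ m n : ℤ, (1 + w' (m, n)) * φ (m, n) + u' (m, n) * φ (m + 1, n)
      + v' (m, n) * φ (m, n + 1) + u' (m, n) * v' (m + 1, n) * φ (m + 1, n + 1) = 0 := by
  intro m n
  have huv' := u'_mul_shift_v'_eq hH hf' hu' hv' (hu _) (hv _) (hw _) (hw (m + 1, n + 1))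
  change factoredOp u' v' w' φ m n = 0
  rw [factoredOp_eq_mul_laplaceOp hu' hv' hw' huv' (hw _) (hw _), laplaceOp_eq_zero hψ hφ,
    mul_zero]
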